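/- For every integer n ≥ 2, the Bernstein elements of Ĥ_n pairwise commute: y_i y_j = y_j y_i for all 1 ≤ i, j ≤ n. -/
import Mathlib


/-!
Statement 6: existence and uniqueness of the parabolic embeddings `ψ_L` and `ψ_R`
for extended affine Hecke algebras.
-/

noncomputable section

namespace ParabolicInduction

/-- The ground ring `R = ℤ[q, q⁻¹]`. -/
abbrev R : Type := LaurentPolynomial ℤ

/-- The element `q ∈ R`. -/
def qR : R := LaurentPolynomial.T 1

/-- The element `q⁻¹ ∈ R`. -/
def qRinv : R := LaurentPolynomial.T (-1)

/-- Generators of the extended affine Hecke algebra `Ĥ_n`:  the `T_i` (present only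
when `2 ≤ n`) and `ρ`, `ρ⁻¹`.  For `n = 1` only `ρ^{±1}` remain, so that `Ĥ_1` is the
Laurent polynomial algebra `R[ρ, ρ⁻¹]`. -/
inductive HGen (n : ℕ) : Type
  | T (i : Fin n) (h : 2 ≤ n) : HGen n
  | rho : HGen n
  | rhoInv : HGen n

/-- Cyclic successor `i ↦ i + 1 (mod n)` on `Fin n`. -/
def cyc {n : ℕ} (i : Fin n) : Fin n := ⟨((i : ℕ) + 1) % n, Nat.mod_lt _ i.pos⟩

/-- The defining relations of the extended affine Hecke algebra `Ĥ_n`. -/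
inductive HRel (n : ℕ) : FreeAlgebra R (HGen n) → FreeAlgebra R (HGen n) → Prop
  | quad (i : Fin n) (h : 2 ≤ n) :
      HRel n ((FreeAlgebra.ι R (HGen.T i h) + algebraMap R _ qR) *
        (FreeAlgebra.ι R (HGen.T i h) - algebraMap R _ qRinv)) 0
  | comm (i j : Fin n) (h : 2 < n)
      (h1 : ((i : ℕ) : ZMod n) - ((j : ℕ) : ZMod n) ≠ 1)
      (h2 : ((i : ℕ) : ZMod n) - ((j : ℕ) : ZMod n) ≠ -1) :
      HRel n (FreeAlgebra.ι R (HGen.T i h.le) * FreeAlgebra.ι R (HGen.T j h.le))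
        (FreeAlgebra.ι R (HGen.T j h.le) * FreeAlgebra.ι R (HGen.T i h.le))
  | braid (i : Fin n) (h : 2 < n) :
      HRel n
        (FreeAlgebra.ι R (HGen.T i h.le) * FreeAlgebra.ι R (HGen.T (cyc i) h.le) *
          FreeAlgebra.ι R (HGen.T i h.le))
        (FreeAlgebra.ι R (HGen.T (cyc i) h.le) * FreeAlgebra.ι R (HGen.T i h.le) *
          FreeAlgebra.ι R (HGen.T (cyc i) h.le))
  | rho_rhoInv : HRel n (FreeAlgebra.ι R HGen.rho * FreeAlgebra.ι R HGen.rhoInv) 1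
  | rhoInv_rho : HRel n (FreeAlgebra.ι R HGen.rhoInv * FreeAlgebra.ι R HGen.rho) 1
  | conj (i : Fin n) (h : 2 ≤ n) :
      HRel n
        (FreeAlgebra.ι R HGen.rho * FreeAlgebra.ι R (HGen.T i h) * FreeAlgebra.ι R HGen.rhoInv)
        (FreeAlgebra.ι R (HGen.T (cyc i) h))

/-- The extended affine Hecke algebra `Ĥ_n`, presented by generators and relations. -/
abbrev Hecke (n : ℕ) : Type := RingQuot (HRel n)

/-- The generator `T_i` of `Ĥ_n` (indices read modulo `n`). -/
def HT {n : ℕ} (h : 2 ≤ n) (i : ℕ) : Hecke n :=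
  RingQuot.mkAlgHom R (HRel n)
    (FreeAlgebra.ι R (HGen.T ⟨i % n, Nat.mod_lt _ (by omega)⟩ h))

/-- The generator `ρ` of `Ĥ_n`. -/
def Hrho (n : ℕ) : Hecke n := RingQuot.mkAlgHom R (HRel n) (FreeAlgebra.ι R HGen.rho)

/-- The generator `ρ⁻¹` of `Ĥ_n`. -/
def HrhoInv (n : ℕ) : Hecke n := RingQuot.mkAlgHom R (HRel n) (FreeAlgebra.ι R HGen.rhoInv)

/-- The element `T_i⁻¹ = T_i + q - q⁻¹` of `Ĥ_n`. -/
def HTinv {n : ℕ} (h : 2 ≤ n) (i : ℕ) : Hecke n :=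
  HT h i + algebraMap R (Hecke n) (qR - qRinv)

/-- The descending ordered product `T_a T_{a-1} ⋯ T_b` (empty, i.e. `1`, if `b > a`). -/
def Tdesc {n : ℕ} (h : 2 ≤ n) (a b : ℕ) : Hecke n :=
  (((List.range' b (a + 1 - b)).reverse).map (HT h)).prod

/-- The ascending ordered product `T_a T_{a+1} ⋯ T_b` (empty, i.e. `1`, if `b < a`). -/
def Tasc {n : ℕ} (h : 2 ≤ n) (a b : ℕ) : Hecke n :=
  ((List.range' a (b + 1 - a)).map (HT h)).prod

/-- The descending ordered product `T_a⁻¹ T_{a-1}⁻¹ ⋯ T_b⁻¹` (empty if `b > a`). -/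
def TinvDesc {n : ℕ} (h : 2 ≤ n) (a b : ℕ) : Hecke n :=
  (((List.range' b (a + 1 - b)).reverse).map (HTinv h)).prod

/-- The ascending ordered product `T_a⁻¹ T_{a+1}⁻¹ ⋯ T_b⁻¹` (empty if `b < a`). -/
def TinvAsc {n : ℕ} (h : 2 ≤ n) (a b : ℕ) : Hecke n :=
  ((List.range' a (b + 1 - a)).map (HTinv h)).prod

/-- The defining conditions for the left parabolic embedding `ψ_L : Ĥ_k → Ĥ_n`:
`ψ_L(T_i) = T_i` for `1 ≤ i ≤ k - 1`,
`ψ_L(T_0) = T_k⁻¹ ⋯ T_{n-1}⁻¹ T_0 T_{n-1} ⋯ T_k` (when `2 ≤ k`), and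
`ψ_L(ρ) = ρ T_{n-1} ⋯ T_k`. -/
def IsPsiL (n k : ℕ) (hn : 2 ≤ n) (f : Hecke k →ₐ[R] Hecke n) : Prop :=
  (∀ (hk : 2 ≤ k) (i : ℕ), 1 ≤ i → i ≤ k - 1 → f (HT hk i) = HT hn i) ∧
  (∀ hk : 2 ≤ k, f (HT hk 0) = TinvAsc hn k (n - 1) * HT hn 0 * Tdesc hn (n - 1) k) ∧
  f (Hrho k) = Hrho n * Tdesc hn (n - 1) k

/-- The defining conditions for the right parabolic embedding `ψ_R : Ĥ_m → Ĥ_n`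
(where `m = n - k`):
`ψ_R(T_j) = T_{k+j}` for `1 ≤ j ≤ m - 1`,
`ψ_R(T_0) = T_0 T_1 ⋯ T_{k-1} T_k T_{k-1}⁻¹ ⋯ T_1⁻¹ T_0⁻¹` (when `2 ≤ m`), and
`ψ_R(ρ) = T_k⁻¹ T_{k-1}⁻¹ ⋯ T_1⁻¹ ρ`. -/
def IsPsiR (n k m : ℕ) (hn : 2 ≤ n) (g : Hecke m →ₐ[R] Hecke n) : Prop :=
  (∀ (hm : 2 ≤ m) (j : ℕ), 1 ≤ j → j ≤ m - 1 → g (HT hm j) = HT hn (k + j)) ∧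
  (∀ hm : 2 ≤ m, g (HT hm 0) = Tasc hn 0 (k - 1) * HT hn k * TinvDesc hn (k - 1) 0) ∧
  g (Hrho m) = TinvDesc hn k 1 * Hrho n

/-- The Bernstein element `y_i = T_{i-1}⁻¹ ⋯ T_1⁻¹ · ρ · T_{n-1} ⋯ T_i` of `Ĥ_n`. -/
def Bernstein {n : ℕ} (hn : 2 ≤ n) (i : ℕ) : Hecke n :=
  TinvDesc hn (i - 1) 1 * Hrho n * Tdesc hn (n - 1) i

section Statement8Aux

variable {n : ℕ} (hn : 2 ≤ n)

lemma qR_mul_qRinv : qR * qRinv = (1 : R) := by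
  rw [qR, qRinv, ← LaurentPolynomial.T_add]; norm_num

lemma HT_congr {i j : ℕ} (h : i % n = j % n) : HT hn i = HT hn j := by
  simp only [HT, h]

lemma HT_lt {i : ℕ} (hi : i < n) :
    HT hn i = RingQuot.mkAlgHom R (HRel n) (FreeAlgebra.ι R (HGen.T ⟨i, hi⟩ hn)) := by
  simp only [HT, Nat.mod_eq_of_lt hi]

private lemma hecke_add_cancel {a b c : Hecke n} (h : a + c = b + c) : a = b := by
  have h1 : a + c + -c = b + c + -c := congrArg (fun z => z + -c) h
  have e : ∀ x : Hecke n, x + c + -c = x := fun x => by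
    rw [add_assoc]
    have hc : c + -c = 0 := add_neg_cancel c
    rw [hc]
    exact add_zero x
  rw [e a, e b] at h1
  exact h1

private lemma alg_split (x : Hecke n) :
    x * algebraMap R (Hecke n) (qR - qRinv) + x * algebraMap R (Hecke n) qRinv
      = x * algebraMap R (Hecke n) qR := by
  rw [← mul_add, ← map_add]
  congr 2
  ring

private lemma quad_key (i : ℕ) :
    HT hn i * HT hn i + HT hn i * algebraMap R (Hecke n) qR
      = HT hn i * algebraMap R (Hecke n) qRinv + 1 := by
  have h := RingQuot.mkAlgHom_rel R (HRel.quad (n := n) ⟨i % n, Nat.mod_lt _ (by omega)⟩ hn)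
  rw [map_mul, map_add, map_sub, map_zero, AlgHom.commutes, AlgHom.commutes] at h
  have h' : (HT hn i + algebraMap R (Hecke n) qR) *
      (HT hn i - algebraMap R (Hecke n) qRinv) = 0 := h
  have e2 : (HT hn i + algebraMap R (Hecke n) qR) * HT hn i
      = (HT hn i + algebraMap R (Hecke n) qR) * algebraMap R (Hecke n) qRinv := by
    have e1 : (HT hn i + algebraMap R (Hecke n) qR) * HT hn i
        = (HT hn i + algebraMap R (Hecke n) qR) * (HT hn i - algebraMap R (Hecke n) qRinv)
          + (HT hn i + algebraMap R (Hecke n) qR) * algebraMap R (Hecke n) qRinv := by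
      rw [← mul_add]
      congr 1
      exact (sub_add_cancel (HT hn i) (algebraMap R (Hecke n) qRinv)).symm
    rw [e1, h', zero_add]
  rw [add_mul, add_mul, Algebra.commutes qR (HT hn i),
    ← map_mul (algebraMap R (Hecke n)) qR qRinv, qR_mul_qRinv, map_one] at e2
  exact e2

lemma HT_mul_HTinv (i : ℕ) : HT hn i * HTinv hn i = 1 := by
  have e5 : HT hn i * HTinv hn i + HT hn i * algebraMap R (Hecke n) qRinv
      = HT hn i * HT hn i + HT hn i * algebraMap R (Hecke n) qR := by
    have e5a : HT hn i * HTinv hn i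
        = HT hn i * HT hn i + HT hn i * algebraMap R (Hecke n) (qR - qRinv) := by
      simp only [HTinv, mul_add]
    rw [e5a, add_assoc, alg_split (HT hn i)]
  have e6 : HT hn i * HTinv hn i + HT hn i * algebraMap R (Hecke n) qRinv
      = 1 + HT hn i * algebraMap R (Hecke n) qRinv := by
    rw [e5, quad_key hn i, add_comm]
  exact hecke_add_cancel e6

lemma HTinv_mul_HT (i : ℕ) : HTinv hn i * HT hn i = 1 := by
  have e5 : HTinv hn i * HT hn i + HT hn i * algebraMap R (Hecke n) qRinv
      = HT hn i * HT hn i + HT hn i * algebraMap R (Hecke n) qR := by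
    have e5a : HTinv hn i * HT hn i
        = HT hn i * HT hn i + HT hn i * algebraMap R (Hecke n) (qR - qRinv) := by
      simp only [HTinv, add_mul]
      rw [← Algebra.commutes (qR - qRinv) (HT hn i)]
    rw [e5a, add_assoc, alg_split (HT hn i)]
  have e6 : HTinv hn i * HT hn i + HT hn i * algebraMap R (Hecke n) qRinv
      = 1 + HT hn i * algebraMap R (Hecke n) qRinv := by
    rw [e5, quad_key hn i, add_comm]
  exact hecke_add_cancel e6

lemma rho_mul_rhoInv : Hrho n * HrhoInv n = 1 := by
  have h := RingQuot.mkAlgHom_rel R (HRel.rho_rhoInv (n := n))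
  rw [map_mul, map_one] at h
  exact h

lemma rhoInv_mul_rho : HrhoInv n * Hrho n = 1 := by
  have h := RingQuot.mkAlgHom_rel R (HRel.rhoInv_rho (n := n))
  rw [map_mul, map_one] at h
  exact h

lemma rho_conj (i : ℕ) : Hrho n * HT hn i * HrhoInv n = HT hn (i + 1) := by
  have h1 : (1 : ℕ) % n = 1 := Nat.mod_eq_of_lt (by omega)
  have key : HT hn (i + 1) = RingQuot.mkAlgHom R (HRel n)
      (FreeAlgebra.ι R (HGen.T (cyc (⟨i % n, Nat.mod_lt _ (by omega)⟩ : Fin n)) hn)) := by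
    have e : HT hn (i + 1) = HT hn (i % n + 1) :=
      HT_congr hn (by rw [Nat.add_mod i 1 n, h1])
    rw [e]; rfl
  rw [key]
  have h := RingQuot.mkAlgHom_rel R
      (HRel.conj (n := n) ⟨i % n, Nat.mod_lt _ (by omega)⟩ hn)
  rw [map_mul, map_mul] at h
  exact h

lemma rho_mul_HT (i : ℕ) : Hrho n * HT hn i = HT hn (i + 1) * Hrho n := by
  calc Hrho n * HT hn i = Hrho n * HT hn i * (HrhoInv n * Hrho n) := by
        rw [rhoInv_mul_rho, mul_one]
    _ = (Hrho n * HT hn i * HrhoInv n) * Hrho n := by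
        simp only [mul_assoc]
    _ = HT hn (i + 1) * Hrho n := by rw [rho_conj]

lemma HT_far_comm {k r : ℕ} (hk : k < n) (hr : r < n) (h2 : k + 2 ≤ r)
    (h3 : r + 2 ≤ n + k) : HT hn k * HT hn r = HT hn r * HT hn k := by
  have h3n : 2 < n := by omega
  have h1 : ((k : ZMod n)) - (r : ZMod n) ≠ 1 := by
    intro hcon
    have he : (k : ZMod n) = ((r + 1 : ℕ) : ZMod n) := by push_cast; linear_combination hcon
    have hh : k % n = (r + 1) % n := (ZMod.natCast_eq_natCast_iff _ _ _).mp he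
    rcases Nat.lt_or_ge (r + 1) n with hlt | hge
    · rw [Nat.mod_eq_of_lt hk, Nat.mod_eq_of_lt hlt] at hh; omega
    · have hrn : r + 1 = n := by omega
      rw [hrn, Nat.mod_self, Nat.mod_eq_of_lt hk] at hh; omega
  have h1' : ((k : ZMod n)) - (r : ZMod n) ≠ -1 := by
    intro hcon
    have he : ((k + 1 : ℕ) : ZMod n) = (r : ZMod n) := by push_cast; linear_combination hcon
    have hh : (k + 1) % n = r % n := (ZMod.natCast_eq_natCast_iff _ _ _).mp he
    rcases Nat.lt_or_ge (k + 1) n with hlt | hge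
    · rw [Nat.mod_eq_of_lt hr, Nat.mod_eq_of_lt hlt] at hh; omega
    · have hkn : k + 1 = n := by omega
      rw [hkn, Nat.mod_self, Nat.mod_eq_of_lt hr] at hh; omega
  have h := RingQuot.mkAlgHom_rel R (HRel.comm (n := n) ⟨k, hk⟩ ⟨r, hr⟩ h3n h1 h1')
  rw [map_mul, map_mul] at h
  rw [HT_lt hn hk, HT_lt hn hr]
  exact h

lemma HT_braid {k : ℕ} (hk1 : 1 ≤ k) (hk : k + 1 < n) :
    HT hn k * HT hn (k + 1) * HT hn k = HT hn (k + 1) * HT hn k * HT hn (k + 1) := by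
  have h3n : 2 < n := by omega
  have h := RingQuot.mkAlgHom_rel R (HRel.braid (n := n) ⟨k, by omega⟩ h3n)
  simp only [map_mul] at h
  have hcyc : cyc (⟨k, by omega⟩ : Fin n) = ⟨k + 1, hk⟩ := by
    simp only [cyc]
    exact Fin.mk_eq_mk.mpr (Nat.mod_eq_of_lt hk)
  rw [hcyc] at h
  rw [HT_lt hn (show k < n by omega), HT_lt hn hk]
  exact h

/-! Peel lemmas for ordered products. -/

private lemma prodDesc_empty (g : ℕ → Hecke n) {a b : ℕ} (h : a < b) :
    (((List.range' b (a + 1 - b)).reverse).map g).prod = 1 := by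
  rw [Nat.sub_eq_zero_of_le (by omega)]; simp

private lemma prodDesc_peel_left (g : ℕ → Hecke n) {a b : ℕ} (h : b ≤ a + 1) :
    (((List.range' b (a + 1 + 1 - b)).reverse).map g).prod
      = g (a + 1) * (((List.range' b (a + 1 - b)).reverse).map g).prod := by
  have h1 : a + 1 + 1 - b = (a + 1 - b) + 1 := by omega
  rw [h1, List.range'_concat]
  have h2 : b + 1 * (a + 1 - b) = a + 1 := by omega
  rw [h2]
  simp [List.reverse_append]

private lemma prodDesc_peel_right (g : ℕ → Hecke n) {a b : ℕ} (h : b ≤ a) :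
    (((List.range' b (a + 1 - b)).reverse).map g).prod
      = (((List.range' (b + 1) (a + 1 - (b + 1))).reverse).map g).prod * g b := by
  have h1 : a + 1 - b = (a - b) + 1 := by omega
  have h2 : a + 1 - (b + 1) = a - b := by omega
  rw [h1, h2, List.range'_succ]
  simp

private lemma prodAsc_empty (g : ℕ → Hecke n) {a b : ℕ} (h : b < a) :
    ((List.range' a (b + 1 - a)).map g).prod = 1 := by
  rw [Nat.sub_eq_zero_of_le (by omega)]; simp

private lemma prodAsc_peel_left (g : ℕ → Hecke n) {a b : ℕ} (h : a ≤ b) :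
    ((List.range' a (b + 1 - a)).map g).prod
      = g a * ((List.range' (a + 1) (b + 1 - (a + 1))).map g).prod := by
  have h1 : b + 1 - a = (b - a) + 1 := by omega
  have h2 : b + 1 - (a + 1) = b - a := by omega
  rw [h1, h2, List.range'_succ]
  simp

private lemma prodAsc_peel_right (g : ℕ → Hecke n) {a b : ℕ} (h : a ≤ b + 1) :
    ((List.range' a (b + 1 + 1 - a)).map g).prod
      = ((List.range' a (b + 1 - a)).map g).prod * g (b + 1) := by
  have h1 : a + 1 + 1 - a = 2 := by omega
  have h1' : b + 1 + 1 - a = (b + 1 - a) + 1 := by omega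
  rw [h1', List.range'_concat]
  have h2 : a + 1 * (b + 1 - a) = b + 1 := by omega
  rw [h2]
  simp

lemma Tdesc_empty {a b : ℕ} (h : a < b) : Tdesc hn a b = 1 := prodDesc_empty _ h
lemma Tdesc_peel_left {a b : ℕ} (h : b ≤ a + 1) :
    Tdesc hn (a + 1) b = HT hn (a + 1) * Tdesc hn a b := prodDesc_peel_left _ h
lemma Tdesc_peel_right {a b : ℕ} (h : b ≤ a) :
    Tdesc hn a b = Tdesc hn a (b + 1) * HT hn b := prodDesc_peel_right _ h
lemma Tdesc_single (a : ℕ) : Tdesc hn a a = HT hn a := by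
  rw [Tdesc_peel_right hn le_rfl, Tdesc_empty hn (by omega), one_mul]

lemma TinvDesc_empty {a b : ℕ} (h : a < b) : TinvDesc hn a b = 1 := prodDesc_empty _ h
lemma TinvDesc_peel_left {a b : ℕ} (h : b ≤ a + 1) :
    TinvDesc hn (a + 1) b = HTinv hn (a + 1) * TinvDesc hn a b := prodDesc_peel_left _ h
lemma TinvDesc_peel_right {a b : ℕ} (h : b ≤ a) :
    TinvDesc hn a b = TinvDesc hn a (b + 1) * HTinv hn b := prodDesc_peel_right _ h

lemma Tasc_empty {a b : ℕ} (h : b < a) : Tasc hn a b = 1 := prodAsc_empty _ h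
lemma Tasc_peel_left {a b : ℕ} (h : a ≤ b) :
    Tasc hn a b = HT hn a * Tasc hn (a + 1) b := prodAsc_peel_left _ h
lemma Tasc_peel_right {a b : ℕ} (h : a ≤ b + 1) :
    Tasc hn a (b + 1) = Tasc hn a b * HT hn (b + 1) := prodAsc_peel_right _ h

lemma commute_HTinv {x : Hecke n} {r : ℕ} (h : x * HT hn r = HT hn r * x) :
    x * HTinv hn r = HTinv hn r * x := by
  simp only [HTinv, mul_add, add_mul, h]
  rw [← Algebra.commutes (qR - qRinv) x]

lemma commute_Tdesc {x : Hecke n} {a b : ℕ} (hb : 1 ≤ b)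
    (hc : ∀ r, b ≤ r → r ≤ a → x * HT hn r = HT hn r * x) :
    x * Tdesc hn a b = Tdesc hn a b * x := by
  induction a with
  | zero => rw [Tdesc_empty hn (by omega), mul_one, one_mul]
  | succ a ih =>
    by_cases hba : b ≤ a + 1
    · rw [Tdesc_peel_left hn hba]
      calc x * (HT hn (a + 1) * Tdesc hn a b)
          = (x * HT hn (a + 1)) * Tdesc hn a b := by rw [mul_assoc]
        _ = (HT hn (a + 1) * x) * Tdesc hn a b := by rw [hc (a + 1) hba le_rfl]
        _ = HT hn (a + 1) * (x * Tdesc hn a b) := by rw [mul_assoc]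
        _ = HT hn (a + 1) * (Tdesc hn a b * x) := by
            rw [ih (fun r h1 h2 => hc r h1 (by omega))]
        _ = (HT hn (a + 1) * Tdesc hn a b) * x := by rw [mul_assoc]
    · rw [Tdesc_empty hn (by omega), mul_one, one_mul]

lemma commute_TinvDesc {x : Hecke n} {a b : ℕ} (hb : 1 ≤ b)
    (hc : ∀ r, b ≤ r → r ≤ a → x * HT hn r = HT hn r * x) :
    x * TinvDesc hn a b = TinvDesc hn a b * x := by
  induction a with
  | zero => rw [TinvDesc_empty hn (by omega), mul_one, one_mul]
  | succ a ih =>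
    by_cases hba : b ≤ a + 1
    · rw [TinvDesc_peel_left hn hba]
      have hcc : x * HTinv hn (a + 1) = HTinv hn (a + 1) * x :=
        commute_HTinv hn (hc (a + 1) hba le_rfl)
      calc x * (HTinv hn (a + 1) * TinvDesc hn a b)
          = (x * HTinv hn (a + 1)) * TinvDesc hn a b := by rw [mul_assoc]
        _ = (HTinv hn (a + 1) * x) * TinvDesc hn a b := by rw [hcc]
        _ = HTinv hn (a + 1) * (x * TinvDesc hn a b) := by rw [mul_assoc]
        _ = HTinv hn (a + 1) * (TinvDesc hn a b * x) := by
            rw [ih (fun r h1 h2 => hc r h1 (by omega))]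
        _ = (HTinv hn (a + 1) * TinvDesc hn a b) * x := by rw [mul_assoc]
    · rw [TinvDesc_empty hn (by omega), mul_one, one_mul]

lemma commute_Tasc {x : Hecke n} {a b : ℕ} (ha : 1 ≤ a)
    (hc : ∀ r, a ≤ r → r ≤ b → x * HT hn r = HT hn r * x) :
    x * Tasc hn a b = Tasc hn a b * x := by
  induction b with
  | zero => rw [Tasc_empty hn (by omega), mul_one, one_mul]
  | succ b ih =>
    by_cases hab : a ≤ b + 1
    · rw [Tasc_peel_right hn hab]
      calc x * (Tasc hn a b * HT hn (b + 1))
          = (x * Tasc hn a b) * HT hn (b + 1) := by rw [mul_assoc]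
        _ = (Tasc hn a b * x) * HT hn (b + 1) := by
            rw [ih (fun r h1 h2 => hc r h1 (by omega))]
        _ = Tasc hn a b * (x * HT hn (b + 1)) := by rw [mul_assoc]
        _ = Tasc hn a b * (HT hn (b + 1) * x) := by rw [hc (b + 1) hab le_rfl]
        _ = (Tasc hn a b * HT hn (b + 1)) * x := by rw [mul_assoc]
    · rw [Tasc_empty hn (by omega), mul_one, one_mul]

lemma ladder_desc {a b k : ℕ} (hb : 1 ≤ b) (hbk : b ≤ k) (hka : k + 1 ≤ a) (han : a ≤ n - 1) :
    HT hn k * Tdesc hn a b = Tdesc hn a b * HT hn (k + 1) := by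
  revert han
  induction a, hka using Nat.le_induction with
  | base =>
    intro han
    obtain ⟨k', rfl⟩ : ∃ k', k = k' + 1 := ⟨k - 1, by omega⟩
    have hbraid : HT hn (k' + 1) * HT hn (k' + 2) * HT hn (k' + 1)
        = HT hn (k' + 2) * HT hn (k' + 1) * HT hn (k' + 2) :=
      HT_braid hn (by omega) (by omega)
    have hcomm : HT hn (k' + 2) * Tdesc hn k' b = Tdesc hn k' b * HT hn (k' + 2) :=
      commute_Tdesc hn hb (fun r h1 h2 =>
        (HT_far_comm hn (by omega) (by omega) (by omega) (by omega)).symm)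
    rw [Tdesc_peel_left hn (by omega), Tdesc_peel_left hn (by omega)]
    calc HT hn (k' + 1) * (HT hn (k' + 1 + 1) * (HT hn (k' + 1) * Tdesc hn k' b))
        = (HT hn (k' + 1) * HT hn (k' + 2) * HT hn (k' + 1)) * Tdesc hn k' b := by
          simp only [mul_assoc]
      _ = (HT hn (k' + 2) * HT hn (k' + 1) * HT hn (k' + 2)) * Tdesc hn k' b := by rw [hbraid]
      _ = HT hn (k' + 2) * HT hn (k' + 1) * (HT hn (k' + 2) * Tdesc hn k' b) := by
          simp only [mul_assoc]
      _ = HT hn (k' + 2) * HT hn (k' + 1) * (Tdesc hn k' b * HT hn (k' + 2)) := by rw [hcomm]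
      _ = HT hn (k' + 1 + 1) * (HT hn (k' + 1) * Tdesc hn k' b) * HT hn (k' + 1 + 1) := by
          simp only [mul_assoc]
  | succ a ha ih =>
    intro han
    have hfar : HT hn k * HT hn (a + 1) = HT hn (a + 1) * HT hn k :=
      HT_far_comm hn (by omega) (by omega) (by omega) (by omega)
    rw [Tdesc_peel_left hn (by omega)]
    calc HT hn k * (HT hn (a + 1) * Tdesc hn a b)
        = (HT hn k * HT hn (a + 1)) * Tdesc hn a b := by rw [mul_assoc]
      _ = (HT hn (a + 1) * HT hn k) * Tdesc hn a b := by rw [hfar]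
      _ = HT hn (a + 1) * (HT hn k * Tdesc hn a b) := by rw [mul_assoc]
      _ = HT hn (a + 1) * (Tdesc hn a b * HT hn (k + 1)) := by rw [ih (by omega)]
      _ = (HT hn (a + 1) * Tdesc hn a b) * HT hn (k + 1) := by rw [mul_assoc]

lemma ladder_asc {a b k : ℕ} (ha : 1 ≤ a) (hak : a ≤ k) (hkb : k + 1 ≤ b) (hbn : b ≤ n - 1) :
    Tasc hn a b * HT hn k = HT hn (k + 1) * Tasc hn a b := by
  revert hbn
  induction b, hkb using Nat.le_induction with
  | base =>
    intro hbn
    obtain ⟨k', rfl⟩ : ∃ k', k = k' + 1 := ⟨k - 1, by omega⟩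
    have hbraid : HT hn (k' + 1) * HT hn (k' + 2) * HT hn (k' + 1)
        = HT hn (k' + 2) * HT hn (k' + 1) * HT hn (k' + 2) :=
      HT_braid hn (by omega) (by omega)
    have hcomm : HT hn (k' + 2) * Tasc hn a k' = Tasc hn a k' * HT hn (k' + 2) :=
      commute_Tasc hn ha (fun r h1 h2 =>
        (HT_far_comm hn (by omega) (by omega) (by omega) (by omega)).symm)
    have e1 : Tasc hn a (k' + 1 + 1) = Tasc hn a k' * HT hn (k' + 1) * HT hn (k' + 2) := by
      rw [Tasc_peel_right hn (by omega), Tasc_peel_right hn (by omega)]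
    rw [e1]
    calc Tasc hn a k' * HT hn (k' + 1) * HT hn (k' + 2) * HT hn (k' + 1)
        = Tasc hn a k' * (HT hn (k' + 1) * HT hn (k' + 2) * HT hn (k' + 1)) := by
          simp only [mul_assoc]
      _ = Tasc hn a k' * (HT hn (k' + 2) * HT hn (k' + 1) * HT hn (k' + 2)) := by rw [hbraid]
      _ = (Tasc hn a k' * HT hn (k' + 2)) * (HT hn (k' + 1) * HT hn (k' + 2)) := by
          simp only [mul_assoc]
      _ = (HT hn (k' + 2) * Tasc hn a k') * (HT hn (k' + 1) * HT hn (k' + 2)) := by rw [← hcomm]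
      _ = HT hn (k' + 1 + 1) * (Tasc hn a k' * HT hn (k' + 1) * HT hn (k' + 2)) := by
          simp only [mul_assoc]
  | succ b hb2 ih =>
    intro hbn
    have hfar : HT hn (b + 1) * HT hn k = HT hn k * HT hn (b + 1) :=
      (HT_far_comm hn (by omega) (by omega) (by omega) (by omega)).symm
    rw [Tasc_peel_right hn (by omega)]
    calc Tasc hn a b * HT hn (b + 1) * HT hn k
        = Tasc hn a b * (HT hn (b + 1) * HT hn k) := by rw [mul_assoc]
      _ = Tasc hn a b * (HT hn k * HT hn (b + 1)) := by rw [hfar]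
      _ = (Tasc hn a b * HT hn k) * HT hn (b + 1) := by rw [mul_assoc]
      _ = (HT hn (k + 1) * Tasc hn a b) * HT hn (b + 1) := by rw [ih (by omega)]
      _ = HT hn (k + 1) * (Tasc hn a b * HT hn (b + 1)) := by rw [mul_assoc]

lemma TinvDesc_mul_Tasc {a b : ℕ} (hb : 1 ≤ b) : TinvDesc hn a b * Tasc hn b a = 1 := by
  induction a with
  | zero => rw [TinvDesc_empty hn (by omega), Tasc_empty hn (by omega), one_mul]
  | succ a ih =>
    by_cases hba : b ≤ a + 1
    · rw [TinvDesc_peel_left hn hba, Tasc_peel_right hn hba]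
      calc (HTinv hn (a + 1) * TinvDesc hn a b) * (Tasc hn b a * HT hn (a + 1))
          = HTinv hn (a + 1) * ((TinvDesc hn a b * Tasc hn b a) * HT hn (a + 1)) := by
            simp only [mul_assoc]
        _ = HTinv hn (a + 1) * HT hn (a + 1) := by rw [ih, one_mul]
        _ = 1 := HTinv_mul_HT hn _
    · rw [TinvDesc_empty hn (by omega), Tasc_empty hn (by omega), one_mul]

lemma Tasc_mul_TinvDesc {a b : ℕ} (hb : 1 ≤ b) : Tasc hn b a * TinvDesc hn a b = 1 := by
  induction a with
  | zero => rw [TinvDesc_empty hn (by omega), Tasc_empty hn (by omega), one_mul]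
  | succ a ih =>
    by_cases hba : b ≤ a + 1
    · rw [TinvDesc_peel_left hn hba, Tasc_peel_right hn hba]
      calc (Tasc hn b a * HT hn (a + 1)) * (HTinv hn (a + 1) * TinvDesc hn a b)
          = Tasc hn b a * ((HT hn (a + 1) * HTinv hn (a + 1)) * TinvDesc hn a b) := by
            simp only [mul_assoc]
        _ = Tasc hn b a * TinvDesc hn a b := by rw [HT_mul_HTinv hn, one_mul]
        _ = 1 := ih
    · rw [TinvDesc_empty hn (by omega), Tasc_empty hn (by omega), one_mul]

lemma ladder_inv {a b k : ℕ} (hb : 1 ≤ b) (hbk : b ≤ k) (hka : k + 1 ≤ a) (han : a ≤ n - 1) :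
    HT hn k * TinvDesc hn a b = TinvDesc hn a b * HT hn (k + 1) := by
  have h1 := TinvDesc_mul_Tasc hn (a := a) (b := b) hb
  have h2 := Tasc_mul_TinvDesc hn (a := a) (b := b) hb
  have h3 := ladder_asc hn hb hbk hka han
  calc HT hn k * TinvDesc hn a b
      = (TinvDesc hn a b * Tasc hn b a) * (HT hn k * TinvDesc hn a b) := by
        rw [h1, one_mul]
    _ = TinvDesc hn a b * ((Tasc hn b a * HT hn k) * TinvDesc hn a b) := by
        simp only [mul_assoc]
    _ = TinvDesc hn a b * ((HT hn (k + 1) * Tasc hn b a) * TinvDesc hn a b) := by rw [h3]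
    _ = TinvDesc hn a b * (HT hn (k + 1) * (Tasc hn b a * TinvDesc hn a b)) := by
        rw [mul_assoc]
    _ = TinvDesc hn a b * HT hn (k + 1) := by rw [h2, mul_one]

lemma Tdesc_mul_rho (a b : ℕ) : Tdesc hn (a + 1) (b + 1) * Hrho n = Hrho n * Tdesc hn a b := by
  induction a generalizing b with
  | zero =>
    rcases Nat.eq_zero_or_pos b with rfl | hbpos
    · rw [Tdesc_single hn, Tdesc_single hn]
      exact (rho_mul_HT hn 0).symm
    · rw [Tdesc_empty hn (by omega), Tdesc_empty hn (by omega), one_mul, mul_one]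
  | succ a ih =>
    by_cases hba : b ≤ a + 1
    · rw [Tdesc_peel_left hn (show b + 1 ≤ a + 1 + 1 by omega),
        Tdesc_peel_left hn (show b ≤ a + 1 by omega)]
      calc (HT hn (a + 1 + 1) * Tdesc hn (a + 1) (b + 1)) * Hrho n
          = HT hn (a + 1 + 1) * (Tdesc hn (a + 1) (b + 1) * Hrho n) := by rw [mul_assoc]
        _ = HT hn (a + 1 + 1) * (Hrho n * Tdesc hn a b) := by rw [ih b]
        _ = (HT hn (a + 1 + 1) * Hrho n) * Tdesc hn a b := by rw [mul_assoc]
        _ = (Hrho n * HT hn (a + 1)) * Tdesc hn a b := by rw [← rho_mul_HT hn (a + 1)]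
        _ = Hrho n * (HT hn (a + 1) * Tdesc hn a b) := by rw [mul_assoc]
    · rw [Tdesc_empty hn (by omega), Tdesc_empty hn (by omega), one_mul, mul_one]

lemma y1_eq : Bernstein hn 1 = Hrho n * Tdesc hn (n - 1) 1 := by
  simp only [Bernstein, Nat.sub_self, TinvDesc_empty hn (show 0 < 1 by omega), one_mul]

lemma HT_comm_y1 {k : ℕ} (hk2 : 2 ≤ k) (hk : k ≤ n - 1) :
    HT hn k * Bernstein hn 1 = Bernstein hn 1 * HT hn k := by
  obtain ⟨k', rfl⟩ : ∃ k', k = k' + 1 := ⟨k - 1, by omega⟩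
  rw [y1_eq hn]
  calc HT hn (k' + 1) * (Hrho n * Tdesc hn (n - 1) 1)
      = (HT hn (k' + 1) * Hrho n) * Tdesc hn (n - 1) 1 := by rw [mul_assoc]
    _ = (Hrho n * HT hn k') * Tdesc hn (n - 1) 1 := by rw [← rho_mul_HT hn k']
    _ = Hrho n * (HT hn k' * Tdesc hn (n - 1) 1) := by rw [mul_assoc]
    _ = Hrho n * (Tdesc hn (n - 1) 1 * HT hn (k' + 1)) := by
        rw [ladder_desc hn (by omega) (by omega) (by omega) (by omega)]
    _ = (Hrho n * Tdesc hn (n - 1) 1) * HT hn (k' + 1) := by rw [mul_assoc]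

lemma y1_comm_X :
    Bernstein hn 1 * (HTinv hn 1 * Hrho n) = (HTinv hn 1 * Hrho n) * Bernstein hn 1 := by
  rw [y1_eq hn]
  have e1 : Tdesc hn (n - 1) 1 * HTinv hn 1 = Tdesc hn (n - 1) 2 := by
    rw [Tdesc_peel_right hn (show (1:ℕ) ≤ n - 1 by omega), mul_assoc, HT_mul_HTinv hn, mul_one]
  have e2 : Tdesc hn (n - 1) 2 * Hrho n = Hrho n * Tdesc hn (n - 2) 1 := by
    have h := Tdesc_mul_rho hn (n - 2) 1
    rw [show n - 2 + 1 = n - 1 from by omega] at h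
    norm_num at h
    exact h
  have e3 : Tdesc hn (n - 1) 1 = HT hn (n - 1) * Tdesc hn (n - 2) 1 := by
    have h := Tdesc_peel_left hn (a := n - 2) (b := 1) (by omega)
    rw [show n - 2 + 1 = n - 1 from by omega] at h
    exact h
  have e4 : Hrho n * HT hn (n - 1) = HT hn n * Hrho n := by
    have h := rho_mul_HT hn (n - 1)
    rwa [show n - 1 + 1 = n from by omega] at h
  have e5 : Hrho n * HT hn n = HT hn 1 * Hrho n := by
    have h := rho_mul_HT hn n
    rwa [HT_congr hn (Nat.add_mod_left n 1)] at h
  have lhs : (Hrho n * Tdesc hn (n - 1) 1) * (HTinv hn 1 * Hrho n)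
      = Hrho n * (Hrho n * Tdesc hn (n - 2) 1) := by
    calc (Hrho n * Tdesc hn (n - 1) 1) * (HTinv hn 1 * Hrho n)
        = Hrho n * ((Tdesc hn (n - 1) 1 * HTinv hn 1) * Hrho n) := by simp only [mul_assoc]
      _ = Hrho n * (Tdesc hn (n - 1) 2 * Hrho n) := by rw [e1]
      _ = Hrho n * (Hrho n * Tdesc hn (n - 2) 1) := by rw [e2]
  have rhs : (HTinv hn 1 * Hrho n) * (Hrho n * Tdesc hn (n - 1) 1)
      = Hrho n * (Hrho n * Tdesc hn (n - 2) 1) := by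
    calc (HTinv hn 1 * Hrho n) * (Hrho n * Tdesc hn (n - 1) 1)
        = HTinv hn 1 * (Hrho n * ((Hrho n * HT hn (n - 1)) * Tdesc hn (n - 2) 1)) := by
          rw [e3]; simp only [mul_assoc]
      _ = HTinv hn 1 * (Hrho n * ((HT hn n * Hrho n) * Tdesc hn (n - 2) 1)) := by rw [e4]
      _ = HTinv hn 1 * ((Hrho n * HT hn n) * (Hrho n * Tdesc hn (n - 2) 1)) := by
          simp only [mul_assoc]
      _ = HTinv hn 1 * ((HT hn 1 * Hrho n) * (Hrho n * Tdesc hn (n - 2) 1)) := by rw [e5]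
      _ = (HTinv hn 1 * HT hn 1) * (Hrho n * (Hrho n * Tdesc hn (n - 2) 1)) := by
          simp only [mul_assoc]
      _ = Hrho n * (Hrho n * Tdesc hn (n - 2) 1) := by rw [HTinv_mul_HT hn, one_mul]
  rw [lhs, rhs]

lemma y1_comm_y {j : ℕ} (hj1 : 1 ≤ j) (hj : j ≤ n) :
    Bernstein hn 1 * Bernstein hn j = Bernstein hn j * Bernstein hn 1 := by
  rcases eq_or_lt_of_le hj1 with heq | hj2
  · rw [← heq]
  · have hcT : ∀ r, 2 ≤ r → r ≤ n - 1 →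
        Bernstein hn 1 * HT hn r = HT hn r * Bernstein hn 1 :=
      fun r hr1 hr2 => (HT_comm_y1 hn hr1 hr2).symm
    have c1 : Bernstein hn 1 * TinvDesc hn (j - 1) 2 = TinvDesc hn (j - 1) 2 * Bernstein hn 1 :=
      commute_TinvDesc hn (by omega) (fun r hr1 hr2 => hcT r hr1 (by omega))
    have c2 := y1_comm_X hn
    have c3 : Bernstein hn 1 * Tdesc hn (n - 1) j = Tdesc hn (n - 1) j * Bernstein hn 1 :=
      commute_Tdesc hn (by omega) (fun r hr1 hr2 => hcT r (by omega) (by omega))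
    have hyj : Bernstein hn j
        = TinvDesc hn (j - 1) 2 * ((HTinv hn 1 * Hrho n) * Tdesc hn (n - 1) j) := by
      simp only [Bernstein]
      rw [TinvDesc_peel_right hn (show (1:ℕ) ≤ j - 1 by omega)]
      norm_num
      simp only [mul_assoc]
    rw [hyj]
    calc Bernstein hn 1 * (TinvDesc hn (j - 1) 2 * ((HTinv hn 1 * Hrho n) * Tdesc hn (n - 1) j))
        = (Bernstein hn 1 * TinvDesc hn (j - 1) 2) * ((HTinv hn 1 * Hrho n) * Tdesc hn (n - 1) j) := by
          simp only [mul_assoc]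
      _ = (TinvDesc hn (j - 1) 2 * Bernstein hn 1) * ((HTinv hn 1 * Hrho n) * Tdesc hn (n - 1) j) := by
          rw [c1]
      _ = TinvDesc hn (j - 1) 2 * ((Bernstein hn 1 * (HTinv hn 1 * Hrho n)) * Tdesc hn (n - 1) j) := by
          simp only [mul_assoc]
      _ = TinvDesc hn (j - 1) 2 * (((HTinv hn 1 * Hrho n) * Bernstein hn 1) * Tdesc hn (n - 1) j) := by
          rw [c2]
      _ = TinvDesc hn (j - 1) 2 * ((HTinv hn 1 * Hrho n) * (Bernstein hn 1 * Tdesc hn (n - 1) j)) := by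
          simp only [mul_assoc]
      _ = TinvDesc hn (j - 1) 2 * ((HTinv hn 1 * Hrho n) * (Tdesc hn (n - 1) j * Bernstein hn 1)) := by
          rw [c3]
      _ = (TinvDesc hn (j - 1) 2 * ((HTinv hn 1 * Hrho n) * Tdesc hn (n - 1) j)) * Bernstein hn 1 := by
          simp only [mul_assoc]

lemma Bernstein_succ {m : ℕ} (hm : 1 ≤ m) (hmn : m ≤ n - 1) :
    Bernstein hn (m + 1) = HTinv hn m * Bernstein hn m * HTinv hn m := by
  obtain ⟨m', rfl⟩ : ∃ m', m = m' + 1 := ⟨m - 1, by omega⟩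
  simp only [Bernstein, Nat.add_sub_cancel]
  rw [TinvDesc_peel_left hn (show (1:ℕ) ≤ m' + 1 by omega),
      Tdesc_peel_right hn (show m' + 1 ≤ n - 1 by omega)]
  simp only [mul_assoc]
  rw [HT_mul_HTinv hn, mul_one]

lemma HT_comm_Bernstein {k m : ℕ} (hk : 1 ≤ k) (hkm : k + 2 ≤ m) (hm : m ≤ n) :
    HT hn k * Bernstein hn m = Bernstein hn m * HT hn k := by
  simp only [Bernstein]
  have l1 : HT hn k * TinvDesc hn (m - 1) 1 = TinvDesc hn (m - 1) 1 * HT hn (k + 1) :=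
    ladder_inv hn (by omega) (by omega) (by omega) (by omega)
  have l2 : HT hn (k + 1) * Hrho n = Hrho n * HT hn k := (rho_mul_HT hn k).symm
  have l3 : HT hn k * Tdesc hn (n - 1) m = Tdesc hn (n - 1) m * HT hn k :=
    commute_Tdesc hn (by omega) (fun r hr1 hr2 =>
      HT_far_comm hn (by omega) (by omega) (by omega) (by omega))
  calc HT hn k * (TinvDesc hn (m - 1) 1 * Hrho n * Tdesc hn (n - 1) m)
      = (HT hn k * TinvDesc hn (m - 1) 1) * (Hrho n * Tdesc hn (n - 1) m) := by
        simp only [mul_assoc]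
    _ = (TinvDesc hn (m - 1) 1 * HT hn (k + 1)) * (Hrho n * Tdesc hn (n - 1) m) := by rw [l1]
    _ = TinvDesc hn (m - 1) 1 * ((HT hn (k + 1) * Hrho n) * Tdesc hn (n - 1) m) := by
        simp only [mul_assoc]
    _ = TinvDesc hn (m - 1) 1 * ((Hrho n * HT hn k) * Tdesc hn (n - 1) m) := by rw [l2]
    _ = TinvDesc hn (m - 1) 1 * (Hrho n * (HT hn k * Tdesc hn (n - 1) m)) := by
        simp only [mul_assoc]
    _ = TinvDesc hn (m - 1) 1 * (Hrho n * (Tdesc hn (n - 1) m * HT hn k)) := by rw [l3]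
    _ = TinvDesc hn (m - 1) 1 * Hrho n * Tdesc hn (n - 1) m * HT hn k := by
        simp only [mul_assoc]

lemma HTinv_comm_Bernstein {k m : ℕ} (hk : 1 ≤ k) (hkm : k + 2 ≤ m) (hm : m ≤ n) :
    HTinv hn k * Bernstein hn m = Bernstein hn m * HTinv hn k :=
  (commute_HTinv hn (HT_comm_Bernstein hn hk hkm hm).symm).symm

lemma Bernstein_comm_le : ∀ i j : ℕ, 1 ≤ i → i ≤ j → j ≤ n →
    Bernstein hn i * Bernstein hn j = Bernstein hn j * Bernstein hn i := by
  intro i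
  induction i with
  | zero => intro j h1 h2 h3; omega
  | succ m ih =>
    intro j h1 h2 h3
    rcases Nat.eq_zero_or_pos m with rfl | hm
    · exact y1_comm_y hn (by omega) h3
    · rcases eq_or_lt_of_le h2 with heq | hlt
      · rw [heq]
      · have hs : Bernstein hn (m + 1) = HTinv hn m * Bernstein hn m * HTinv hn m :=
          Bernstein_succ hn hm (by omega)
        have hc : HTinv hn m * Bernstein hn j = Bernstein hn j * HTinv hn m :=
          HTinv_comm_Bernstein hn hm (by omega) h3
        have hy : Bernstein hn m * Bernstein hn j = Bernstein hn j * Bernstein hn m :=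
          ih j hm (by omega) h3
        rw [hs]
        calc (HTinv hn m * Bernstein hn m * HTinv hn m) * Bernstein hn j
            = HTinv hn m * (Bernstein hn m * (HTinv hn m * Bernstein hn j)) := by
              simp only [mul_assoc]
          _ = HTinv hn m * (Bernstein hn m * (Bernstein hn j * HTinv hn m)) := by rw [hc]
          _ = HTinv hn m * ((Bernstein hn m * Bernstein hn j) * HTinv hn m) := by
              simp only [mul_assoc]
          _ = HTinv hn m * ((Bernstein hn j * Bernstein hn m) * HTinv hn m) := by rw [hy]
          _ = (HTinv hn m * Bernstein hn j) * (Bernstein hn m * HTinv hn m) := by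
              simp only [mul_assoc]
          _ = (Bernstein hn j * HTinv hn m) * (Bernstein hn m * HTinv hn m) := by rw [hc]
          _ = Bernstein hn j * (HTinv hn m * Bernstein hn m * HTinv hn m) := by
              simp only [mul_assoc]

end Statement8Aux

/-- **Statement 8.**  The Bernstein elements of `Ĥ_n` pairwise commute. -/
theorem statement_8 (n : ℕ) (hn : 2 ≤ n) (i j : ℕ) (hi1 : 1 ≤ i) (hin : i ≤ n)
    (hj1 : 1 ≤ j) (hjn : j ≤ n) :
    Bernstein hn i * Bernstein hn j = Bernstein hn j * Bernstein hn i := by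
  rcases le_total i j with h | h
  · exact Bernstein_comm_le hn i j hi1 h hjn
  · exact (Bernstein_comm_le hn j i hj1 h hin).symm

end ParabolicInduction
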